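/- arXiv:2309.02664 — 16 statements merged into one kernel-verified Lean document; each statement's English description precedes it below -/
import Mathlib

section
/- Let γ ∈ (0,1], α, θ ∈ (0,1), λ > 0. Define Ψ_X(s) = exp{-λ((1-s)/(1-θs))^γ}, Ψ_ε(s) = exp{-λ(1-α^γ)((1-s)/(1-θs))^γ}, and Ψ_G(s) = (ᾱ - (θ-α)s)/(1-αθ-ᾱθs) with ᾱ = 1-α. Then Ψ_X(s) = Ψ_X(Ψ_G(s)) · Ψ_ε(s) for all s in [0,1]. -/
open Real

/-- The functional equation `Ψ_X(s) = Ψ_X(Ψ_G(s)) Ψ_ε(s)` for the heavy-tailed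
compound-stable INAR(1) model with linear fractional thinning pgf. -/
theorem functional_eq_compound_stable (γ α θ lam : ℝ)
    (hγ : γ ∈ Set.Ioc (0:ℝ) 1) (hα : α ∈ Set.Ioo (0:ℝ) 1)
    (hθ : θ ∈ Set.Ioo (0:ℝ) 1) (hlam : 0 < lam) :
    ∀ s ∈ Set.Icc (0:ℝ) 1,
      Real.exp (-(lam * ((1 - s) / (1 - θ * s)) ^ γ))
        = Real.exp (-(lam *
            ((1 - (((1 - α) - (θ - α) * s) / (1 - α * θ - (1 - α) * θ * s)))
              / (1 - θ * (((1 - α) - (θ - α) * s)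
                  / (1 - α * θ - (1 - α) * θ * s)))) ^ γ))
          * Real.exp (-(lam * (1 - α ^ γ) * ((1 - s) / (1 - θ * s)) ^ γ)) := by
  obtain ⟨hα0, hα1⟩ := hα
  obtain ⟨hθ0, hθ1⟩ := hθ
  intro s ⟨hs0, hs1⟩
  have hden : 0 < 1 - θ * s := by nlinarith
  have hD : 0 < 1 - α * θ - (1 - α) * θ * s := by nlinarith
  have hratio : (1 - (((1 - α) - (θ - α) * s) / (1 - α * θ - (1 - α) * θ * s)))
      / (1 - θ * (((1 - α) - (θ - α) * s) / (1 - α * θ - (1 - α) * θ * s)))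
      = α * ((1 - s) / (1 - θ * s)) := by
    have h2 : 0 < 1 - θ * (((1 - α) - (θ - α) * s) / (1 - α * θ - (1 - α) * θ * s)) := by
      have : 1 - θ * (((1 - α) - (θ - α) * s) / (1 - α * θ - (1 - α) * θ * s))
          = (1 - α * θ - (1 - α) * θ * s - θ * ((1 - α) - (θ - α) * s))
            / (1 - α * θ - (1 - α) * θ * s) := by
        rw [eq_div_iff hD.ne', sub_mul, mul_div_assoc', div_mul_cancel₀ _ hD.ne']; ring
      rw [this]
      have hnum : 0 < 1 - α * θ - (1 - α) * θ * s - θ * ((1 - α) - (θ - α) * s) := by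
        nlinarith
      positivity
    have h3 : (0:ℝ) < 1 + (-θ - θ * s) + θ ^ 2 * s := by nlinarith
    have ht : (1 + (-θ - θ * s) + θ ^ 2 * s) * (1 + (-θ - θ * s) + θ ^ 2 * s)⁻¹ = 1 :=
      mul_inv_cancel₀ h3.ne'
    field_simp
    linear_combination α * (1 - s) * ht
  rw [hratio, ← Real.exp_add]
  congr 1
  have hx : (0:ℝ) ≤ (1 - s) / (1 - θ * s) := by
    apply div_nonneg <;> linarith
  rw [Real.mul_rpow (le_of_lt hα0) hx]
  ring
end

section
/- Let α ∈ (0,1), μ > 0, r > 0. With Ψ_X(s) = (1+μr^{-1}(1-s))^{-r}, Ψ_ε(s) = (1+(1-α)μr^{-1}(1-s))^{-r}, and Ψ_G(s) = 1 - α(1-s)/(1+r^{-1}(1-α)μ(1-s)), the functional equation Ψ_X(s) = Ψ_X(Ψ_G(s)) · Ψ_ε(s) holds for all s in [0,1]. -/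
open Real

/-- The functional equation `Ψ_X(s) = Ψ_X(Ψ_G(s)) Ψ_ε(s)` for the novel negative
binomial INAR(1) model. -/
theorem functional_eq_novel_NB (α μ r : ℝ)
    (hα : α ∈ Set.Ioo (0:ℝ) 1) (hμ : 0 < μ) (hr : 0 < r) :
    ∀ s ∈ Set.Icc (0:ℝ) 1,
      (1 + μ * r⁻¹ * (1 - s)) ^ (-r)
        = (1 + μ * r⁻¹ *
            (1 - (1 - α * (1 - s) / (1 + r⁻¹ * (1 - α) * μ * (1 - s))))) ^ (-r)
          * (1 + (1 - α) * μ * r⁻¹ * (1 - s)) ^ (-r) := by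
  obtain ⟨hα0, hα1⟩ := hα
  intro s hs
  obtain ⟨hs0, hs1⟩ := hs
  have ht : 0 ≤ 1 - s := by linarith
  have hα' : 0 ≤ 1 - α := by linarith
  have hC : 0 < 1 + r⁻¹ * (1 - α) * μ * (1 - s) := by positivity
  have hB : 0 ≤ 1 + μ * r⁻¹ *
      (1 - (1 - α * (1 - s) / (1 + r⁻¹ * (1 - α) * μ * (1 - s)))) := by
    rw [sub_sub_cancel]
    positivity
  have hC2 : (0:ℝ) ≤ 1 + (1 - α) * μ * r⁻¹ * (1 - s) := by positivity
  rw [← Real.mul_rpow hB hC2]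
  congr 1
  field_simp
  ring
end

section
/- Let α ∈ (0,1), μ > 0 and set q = (1+(1-α)μ)^{-1}, q̄ = 1-q. Then Ψ_G(s) = 1 - α(1-s)/(1+(1-α)μ(1-s)) satisfies Ψ_G(s) = 1 - αq(1-s)/(1-q̄s), and Ψ_G is the pgf of the distribution on nonnegative integers with P(G=0) = 1-αq and P(G=k) = (αq)q q̄^{k-1} for k ≥ 1. -/
/-- The thinning pgf of the novel geometric INAR(1) process: the reparameterized
form `1 - αq(1-s)/(1-q̄s)` with `q = (1+(1-α)μ)⁻¹`, and the fact that it is the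
pgf of the pmf `P(G=0) = 1-αq`, `P(G=k) = (αq)q q̄^{k-1}` for `k ≥ 1`. -/
theorem novel_geometric_thinning_pgf (α μ : ℝ)
    (hα : α ∈ Set.Ioo (0:ℝ) 1) (hμ : 0 < μ) :
    (∀ s : ℝ, 1 - (1 - (1 + (1 - α) * μ)⁻¹) * s ≠ 0 →
      1 - α * (1 - s) / (1 + (1 - α) * μ * (1 - s))
        = 1 - α * (1 + (1 - α) * μ)⁻¹ * (1 - s)
            / (1 - (1 - (1 + (1 - α) * μ)⁻¹) * s)) ∧
    (∀ s : ℝ, |s| < 1 →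
      1 - α * (1 - s) / (1 + (1 - α) * μ * (1 - s))
        = (1 - α * (1 + (1 - α) * μ)⁻¹)
          + ∑' k : ℕ, (α * (1 + (1 - α) * μ)⁻¹) * (1 + (1 - α) * μ)⁻¹
              * (1 - (1 + (1 - α) * μ)⁻¹) ^ k * s ^ (k + 1)) := by
  obtain ⟨hα0, hα1⟩ := hα
  obtain ⟨c, hc⟩ : ∃ c : ℝ, c = 1 + (1 - α) * μ := ⟨_, rfl⟩
  have hc1 : 1 < c := by
    have h1 : 0 < (1 - α) * μ := mul_pos (by linarith) hμ
    rw [hc]; linarith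
  have hc0 : (0:ℝ) < c := by linarith
  have hcne : c ≠ 0 := ne_of_gt hc0
  have hq0 : 0 < c⁻¹ := inv_pos.mpr hc0
  have hq1 : c⁻¹ < 1 := by
    rw [inv_lt_one_iff₀]; right; exact hc1
  have hfact : ∀ s : ℝ, 1 + (1 - α) * μ * (1 - s) = c * (1 - (1 - c⁻¹) * s) := by
    intro s
    have h : (1:ℝ) + (1 - α) * μ ≠ 0 := hc ▸ hcne
    rw [hc]; field_simp; ring
  constructor
  · intro s hs
    rw [← hc] at hs ⊢
    have hden : 1 + (1 - α) * μ * (1 - s) ≠ 0 := by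
      rw [hfact]; exact mul_ne_zero hcne hs
    rw [hfact s] at hden ⊢
    field_simp
  · intro s hs
    rw [← hc]
    have hr : |(1 - c⁻¹) * s| < 1 := by
      rw [abs_mul, abs_of_nonneg (by linarith : (0:ℝ) ≤ 1 - c⁻¹)]
      calc (1 - c⁻¹) * |s| ≤ 1 * |s| := by
            apply mul_le_mul_of_nonneg_right (by linarith) (abs_nonneg s)
        _ < 1 := by rw [one_mul]; exact hs
    have hdne : 1 - (1 - c⁻¹) * s ≠ 0 := by
      intro h
      have h1 : (1 - c⁻¹) * s = 1 := by linarith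
      rw [h1, abs_one] at hr
      linarith
    have key : ∑' k : ℕ, (α * c⁻¹) * c⁻¹ * (1 - c⁻¹) ^ k * s ^ (k + 1)
        = α * c⁻¹ * c⁻¹ * s * (1 - (1 - c⁻¹) * s)⁻¹ := by
      have hcong : ∀ k : ℕ, (α * c⁻¹) * c⁻¹ * (1 - c⁻¹) ^ k * s ^ (k + 1)
          = (α * c⁻¹ * c⁻¹ * s) * ((1 - c⁻¹) * s) ^ k := by
        intro k; rw [mul_pow]; ring
      rw [tsum_congr hcong, tsum_mul_left,
        tsum_geometric_of_norm_lt_one (by rw [Real.norm_eq_abs]; exact hr)]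
    rw [key]
    have hden : 1 + (1 - α) * μ * (1 - s) ≠ 0 := by
      rw [hfact]; exact mul_ne_zero hcne hdne
    have he : c * (1 - (1 - c⁻¹) * s) = c - c * s + s := by field_simp; ring
    rw [hfact s, he] at hden
    have h3 : 1 - (1 - c⁻¹) * s = (c - c * s + s) / c := by field_simp; ring
    rw [hfact s, h3, inv_div]
    rw [mul_div_cancel₀ _ hcne]
    have hden' : (1 - s) * c + s ≠ 0 := by convert hden using 1; ring
    field_simp
    ring
end

section
/- Let α ∈ (0,1), μ > 0, q = (1+(1-α)μ)^{-1}, and x a positive integer. Define A_i^{(x)}(y) = C(x,i) y^i (1-y)^{x-i} and B_l^{(k)}(y) = C(k-1,l-1) y^l (1-y)^{k-l}. Then the coefficient of s^0 in Ψ_G(s)^x is (1-αq)^x and for k ≥ 1 the coefficient of s^k in Ψ_G(s)^x is Σ_{i=1}^{min(k,x)} A_i^{(x)}(αq) B_i^{(k)}(q), where Ψ_G(s) = 1 - αq(1-s)/(1-(1-q)s). -/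
/-- Conditional pmf of `(α,μ)⋆X` given `X = x`: the series expansion of `Ψ_G(s)^x`
for the novel geometric thinning pgf, with coefficients expressed via the
functions `A_i^{(x)}` and `B_l^{(k)}`. -/
theorem conditional_pmf_novel_geometric (α μ : ℝ)
    (hα : α ∈ Set.Ioo (0:ℝ) 1) (hμ : 0 < μ) (x : ℕ) (hx : 1 ≤ x)
    (q : ℝ) (hq : q = (1 + (1 - α) * μ)⁻¹) :
    ∀ s : ℝ, |s| < 1 →
      (1 - α * q * (1 - s) / (1 - (1 - q) * s)) ^ x
        = (1 - α * q) ^ x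
          + ∑' k : ℕ,
              (∑ i ∈ Finset.Icc 1 (min (k + 1) x),
                ((x.choose i : ℝ) * (α * q) ^ i * (1 - α * q) ^ (x - i))
                  * ((k.choose (i - 1) : ℝ) * q ^ i * (1 - q) ^ (k + 1 - i)))
              * s ^ (k + 1) := by
  obtain ⟨hα0, hα1⟩ := hα
  intro s hs
  have hq0 : 0 < q := by
    rw [hq]
    have : 0 < 1 + (1 - α) * μ := by nlinarith
    positivity
  have hq1 : q < 1 := by
    rw [hq]
    have h1 : 1 < 1 + (1 - α) * μ := by nlinarith
    have := inv_lt_one_of_one_lt₀ h1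
    linarith
  have hs0 : (0:ℝ) ≤ |s| := abs_nonneg s
  have hps : ‖(1 - q) * s‖ < 1 := by
    rw [Real.norm_eq_abs, abs_mul, abs_of_nonneg (by linarith : (0:ℝ) ≤ 1 - q)]
    nlinarith [abs_nonneg s]
  have hden : (0:ℝ) < 1 - (1 - q) * s := by
    have : (1 - q) * s ≤ |(1 - q) * s| := le_abs_self _
    rw [Real.norm_eq_abs] at hps
    linarith
  have hden' : 1 - (1 - q) * s ≠ 0 := ne_of_gt hden
  -- the thinning pgf value
  set t : ℝ := q * s / (1 - (1 - q) * s) with ht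
  -- constants
  set A : ℕ → ℝ := fun i => (x.choose i : ℝ) * (α * q) ^ i * (1 - α * q) ^ (x - i) with hA
  -- per-index HasSum
  have hf : ∀ i ∈ Finset.Icc 1 x,
      HasSum (fun k : ℕ => ((k.choose (i - 1) : ℝ) * q ^ i * (1 - q) ^ (k + 1 - i)) * s ^ (k + 1))
        (t ^ i) := by
    intro i hi
    have hi1 : 1 ≤ i := (Finset.mem_Icc.mp hi).1
    have base : HasSum (fun j : ℕ => (((j + (i - 1)).choose (i - 1) : ℝ)) * ((1 - q) * s) ^ j)
        (1 / (1 - (1 - q) * s) ^ ((i - 1) + 1)) :=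
      hasSum_choose_mul_geometric_of_norm_lt_one _ hps
    have base2 := base.mul_left ((q * s) ^ i)
    have hinj : Function.Injective (fun j : ℕ => j + (i - 1)) := fun a b h => by
      simpa using h
    have hzero : ∀ k : ℕ, k ∉ Set.range (fun j : ℕ => j + (i - 1)) →
        ((k.choose (i - 1) : ℝ) * q ^ i * (1 - q) ^ (k + 1 - i)) * s ^ (k + 1) = 0 := by
      intro k hk
      have hlt : k < i - 1 := by
        by_contra h
        exact hk ⟨k - (i - 1), by show k - (i - 1) + (i - 1) = k; omega⟩
      rw [Nat.choose_eq_zero_of_lt hlt]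
      simp
    rw [← Function.Injective.hasSum_iff hinj hzero]
    have hcomp : (fun k : ℕ => ((k.choose (i - 1) : ℝ) * q ^ i * (1 - q) ^ (k + 1 - i)) * s ^ (k + 1))
        ∘ (fun j : ℕ => j + (i - 1))
        = fun j : ℕ => (q * s) ^ i * ((((j + (i - 1)).choose (i - 1) : ℝ)) * ((1 - q) * s) ^ j) := by
      funext j
      simp only [Function.comp_apply]
      rw [show j + (i - 1) + 1 - i = j from by omega, show j + (i - 1) + 1 = j + i from by omega,
        pow_add, mul_pow, mul_pow]
      ring
    rw [hcomp]
    have hval : (q * s / (1 - (1 - q) * s)) ^ i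
        = (q * s) ^ i * (1 / (1 - (1 - q) * s) ^ (i - 1 + 1)) := by
      rw [Nat.sub_add_cancel hi1, div_pow, div_eq_mul_one_div]
    show HasSum _ ((q * s / (1 - (1 - q) * s)) ^ i)
    rw [hval]
    exact base2
  -- total HasSum
  have htot : HasSum (fun k : ℕ => ∑ i ∈ Finset.Icc 1 x,
      A i * (((k.choose (i - 1) : ℝ) * q ^ i * (1 - q) ^ (k + 1 - i)) * s ^ (k + 1)))
      (∑ i ∈ Finset.Icc 1 x, A i * t ^ i) :=
    hasSum_sum fun i hi => (hf i hi).mul_left (A i)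
  -- identify terms with the statement's form
  have hcong : ∀ k : ℕ,
      (∑ i ∈ Finset.Icc 1 (min (k + 1) x),
        ((x.choose i : ℝ) * (α * q) ^ i * (1 - α * q) ^ (x - i))
          * ((k.choose (i - 1) : ℝ) * q ^ i * (1 - q) ^ (k + 1 - i))) * s ^ (k + 1)
      = ∑ i ∈ Finset.Icc 1 x,
          A i * (((k.choose (i - 1) : ℝ) * q ^ i * (1 - q) ^ (k + 1 - i)) * s ^ (k + 1)) := by
    intro k
    rw [Finset.sum_mul]
    refine Finset.sum_subset ?_ ?_ |>.trans (Finset.sum_congr rfl fun i _ => by rw [hA]; ring)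
    · intro i hi
      simp only [Finset.mem_Icc, le_min_iff, min_le_iff] at hi ⊢
      omega
    · intro i hi hni
      simp only [Finset.mem_Icc, le_min_iff, min_le_iff] at hi hni
      have : k < i - 1 := by omega
      rw [Nat.choose_eq_zero_of_lt this]
      simp
  have hts : (∑' k : ℕ,
      (∑ i ∈ Finset.Icc 1 (min (k + 1) x),
        ((x.choose i : ℝ) * (α * q) ^ i * (1 - α * q) ^ (x - i))
          * ((k.choose (i - 1) : ℝ) * q ^ i * (1 - q) ^ (k + 1 - i))) * s ^ (k + 1))
      = ∑ i ∈ Finset.Icc 1 x, A i * t ^ i := by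
    rw [tsum_congr hcong, htot.tsum_eq]
  rw [hts]
  -- algebraic identity for the base of the power
  have key : 1 - α * q * (1 - s) / (1 - (1 - q) * s) = α * q * t + (1 - α * q) := by
    rw [ht]
    have hD : (1 - (1 - q) * s) * (1 - (1 - q) * s)⁻¹ = 1 := mul_inv_cancel₀ hden'
    simp only [div_eq_mul_inv]
    linear_combination (-(α * q)) * hD
  rw [key, add_pow, Finset.sum_range_succ']
  have hIcc : ∑ i ∈ Finset.Icc 1 x, A i * t ^ i
      = ∑ i ∈ Finset.range x, (α * q * t) ^ (i + 1) * (1 - α * q) ^ (x - (i + 1)) * (x.choose (i + 1) : ℝ) := by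
    rw [← Finset.Ico_add_one_right_eq_Icc, Finset.sum_Ico_eq_sum_range, Nat.add_sub_cancel]
    refine Finset.sum_congr rfl fun i _ => ?_
    rw [hA, show 1 + i = i + 1 from by omega, mul_pow]
    ring
  rw [hIcc]
  simp
  ring
end

section
/- Let α ∈ (0,1), μ > 0, and define Ψ_G(s) = 1 - α(1-s)/(1+(1-α)μ(1-s)) and Ψ_G^{(h)} the h-fold composition of Ψ_G (with Ψ_G^{(0)}(s)=s). Then for every h ≥ 1, Ψ_G^{(h)}(s) = 1 - α^h q_h (1-s)/(1-(1-q_h)s) where q_h = (1+(1-α^h)μ)^{-1}. -/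
lemma novel_geometric_pgf_aux (α μ : ℝ)
    (hα : α ∈ Set.Ioo (0:ℝ) 1) (hμ : 0 < μ) (h : ℕ) :
    ∀ s ∈ Set.Icc (0:ℝ) 1,
      (fun t : ℝ => 1 - α * (1 - t) / (1 + (1 - α) * μ * (1 - t)))^[h] s
        = 1 - α ^ h * (1 - s) / (1 + (1 - α ^ h) * μ * (1 - s)) := by
  obtain ⟨hα0, hα1⟩ := hα
  induction h with
  | zero => intro s hs; simp
  | succ h ih =>
    intro s hs
    obtain ⟨hs0, hs1⟩ := hs
    have hu : (0:ℝ) ≤ 1 - s := by linarith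
    have hαh : α ^ h ≤ 1 := pow_le_one₀ (le_of_lt hα0) (le_of_lt hα1)
    have hαh1 : α ^ (h+1) ≤ 1 := pow_le_one₀ (le_of_lt hα0) (le_of_lt hα1)
    have hαhp : 0 < α ^ h := pow_pos hα0 h
    have hm1 : (0:ℝ) ≤ (1 - α ^ h) * μ * (1 - s) :=
      mul_nonneg (mul_nonneg (by linarith) hμ.le) hu
    have hm2 : (0:ℝ) ≤ (1 - α ^ (h+1)) * μ * (1 - s) :=
      mul_nonneg (mul_nonneg (by linarith) hμ.le) hu
    have hden : 0 < 1 + (1 - α ^ h) * μ * (1 - s) := by linarith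
    have hden1 : 0 < 1 + (1 - α ^ (h+1)) * μ * (1 - s) := by linarith
    rw [Function.iterate_succ_apply', ih s ⟨hs0, hs1⟩]
    show 1 - α * (1 - (1 - α ^ h * (1 - s) / (1 + (1 - α ^ h) * μ * (1 - s))))
        / (1 + (1 - α) * μ * (1 - (1 - α ^ h * (1 - s) / (1 + (1 - α ^ h) * μ * (1 - s)))))
      = _
    have key : 1 - (1 - α ^ h * (1 - s) / (1 + (1 - α ^ h) * μ * (1 - s)))
        = α ^ h * (1 - s) / (1 + (1 - α ^ h) * μ * (1 - s)) := by ring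
    rw [key]
    have h3 : 1 + (1 - α) * μ * (α ^ h * (1 - s) / (1 + (1 - α ^ h) * μ * (1 - s)))
        = (1 + (1 - α ^ h) * μ * (1 - s) + (1 - α) * μ * (α ^ h * (1 - s)))
            / (1 + (1 - α ^ h) * μ * (1 - s)) := by
      rw [add_div, div_self (ne_of_gt hden)]; ring
    have hnum : 0 < 1 + (1 - α ^ h) * μ * (1 - s) + (1 - α) * μ * (α ^ h * (1 - s)) := by
      have : (0:ℝ) ≤ (1 - α) * μ * (α ^ h * (1 - s)) :=
        mul_nonneg (mul_nonneg (by linarith) hμ.le) (mul_nonneg hαhp.le hu)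
      linarith
    rw [h3, mul_div_assoc' α, div_div_div_cancel_right₀]
    congr 1
    rw [div_eq_div_iff (ne_of_gt hnum) (ne_of_gt hden1)]
    ring
    exact ne_of_gt hden

/-- Iterates of the novel geometric thinning pgf: for every `h ≥ 1`,
`Ψ_G^{(h)}(s) = 1 - α^h q_h (1-s)/(1-(1-q_h)s)` with `q_h = (1+(1-α^h)μ)⁻¹`. -/
theorem novel_geometric_pgf_iterates (α μ : ℝ)
    (hα : α ∈ Set.Ioo (0:ℝ) 1) (hμ : 0 < μ) (h : ℕ) (hh : 1 ≤ h) :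
    ∀ s ∈ Set.Icc (0:ℝ) 1,
      (fun t : ℝ => 1 - α * (1 - t) / (1 + (1 - α) * μ * (1 - t)))^[h] s
        = 1 - α ^ h * (1 + (1 - α ^ h) * μ)⁻¹ * (1 - s)
            / (1 - (1 - (1 + (1 - α ^ h) * μ)⁻¹) * s) := by
  intro s hs
  obtain ⟨hα0, hα1⟩ := hα
  obtain ⟨hs0, hs1⟩ := hs
  rw [novel_geometric_pgf_aux α μ ⟨hα0, hα1⟩ hμ h s ⟨hs0, hs1⟩]
  have hαh : α ^ h ≤ 1 := pow_le_one₀ (le_of_lt hα0) (le_of_lt hα1)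
  have hD : (1:ℝ) ≤ 1 + (1 - α ^ h) * μ := by nlinarith
  have hD0 : 0 < 1 + (1 - α ^ h) * μ := by linarith
  have hq0 : 0 < (1 + (1 - α ^ h) * μ)⁻¹ := inv_pos.2 hD0
  have hq1 : (1 + (1 - α ^ h) * μ)⁻¹ ≤ 1 := by
    rw [inv_le_one_iff₀]; right; exact hD
  have hm1 : (0:ℝ) ≤ (1 - α ^ h) * μ * (1 - s) :=
    mul_nonneg (mul_nonneg (by linarith) hμ.le) (by linarith)
  have hden : 0 < 1 + (1 - α ^ h) * μ * (1 - s) := by linarith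
  have hden2 : 0 < 1 - (1 - (1 + (1 - α ^ h) * μ)⁻¹) * s := by
    have h1 : (1 - (1 + (1 - α ^ h) * μ)⁻¹) * s ≤ (1 - (1 + (1 - α ^ h) * μ)⁻¹) * 1 :=
      mul_le_mul_of_nonneg_left hs1 (by linarith)
    nlinarith
  congr 1
  rw [div_eq_div_iff (ne_of_gt hden) (ne_of_gt hden2)]
  have hDe : (1 + (1 - α ^ h) * μ)⁻¹ * (1 + (1 - α ^ h) * μ) = 1 :=
    inv_mul_cancel₀ (ne_of_gt hD0)
  field_simp
  ring
end

section
/- Let α ∈ (0,1), μ > 0, h ≥ 1, Ψ_ε(s) = (1+(1-α)μ(1-s))^{-1}, and Ψ_G^{(j)} the j-fold composite of Ψ_G(s) = 1-α(1-s)/(1+(1-α)μ(1-s)). Then ∏_{j=1}^{h} Ψ_ε(Ψ_G^{(h-j)}(s)) = q_h/(1-(1-q_h)s) with q_h = (1+(1-α^h)μ)^{-1}. -/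
/-- The `h`-step accumulated innovation pgf of the novel geometric INAR(1)
process telescopes to the geometric pgf with parameter `q_h`. -/
theorem accumulated_innovation_novel_geometric (α μ : ℝ)
    (hα : α ∈ Set.Ioo (0:ℝ) 1) (hμ : 0 < μ) (h : ℕ) (hh : 1 ≤ h) :
    ∀ s ∈ Set.Icc (0:ℝ) 1,
      (∏ j ∈ Finset.Icc 1 h,
        (1 + (1 - α) * μ *
          (1 - (fun t : ℝ =>
            1 - α * (1 - t) / (1 + (1 - α) * μ * (1 - t)))^[h - j] s))⁻¹)
        = (1 + (1 - α ^ h) * μ)⁻¹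
            / (1 - (1 - (1 + (1 - α ^ h) * μ)⁻¹) * s) := by
  obtain ⟨hα0, hα1⟩ := hα
  intro s hs
  obtain ⟨hs0, hs1⟩ := hs
  set f : ℝ → ℝ := fun t : ℝ =>
      1 - α * (1 - t) / (1 + (1 - α) * μ * (1 - t)) with hf
  have hu0 : (0:ℝ) ≤ 1 - s := by linarith
  have hpow : ∀ k : ℕ, α ^ k ≤ 1 := fun k => pow_le_one₀ hα0.le hα1.le
  have hD : ∀ k : ℕ, 0 < 1 + (1 - α ^ k) * μ * (1 - s) := by
    intro k
    nlinarith [hpow k, mul_nonneg hμ.le hu0]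
  -- key identity: the "1 + (1-α)μ(1-f^[k] s)" factor is a ratio of consecutive Ds
  have ratio : ∀ k : ℕ,
      1 - f^[k] s = α ^ k * (1 - s) / (1 + (1 - α ^ k) * μ * (1 - s)) →
      1 + (1 - α) * μ * (1 - f^[k] s)
        = (1 + (1 - α ^ (k+1)) * μ * (1 - s)) / (1 + (1 - α ^ k) * μ * (1 - s)) := by
    intro k hk
    rw [hk, eq_div_iff (hD k).ne', ← mul_div_assoc, add_mul, one_mul,
      div_mul_cancel₀ _ (hD k).ne']
    ring
  have key : ∀ k : ℕ,
      1 - f^[k] s = α ^ k * (1 - s) / (1 + (1 - α ^ k) * μ * (1 - s)) := by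
    intro k
    induction k with
    | zero => simp
    | succ k ih =>
      have hDk := hD k
      have hDk1 := hD (k + 1)
      rw [Function.iterate_succ_apply']
      have step : 1 + (1 - α) * μ * (1 - f^[k] s)
          = (1 + (1 - α ^ (k+1)) * μ * (1 - s)) / (1 + (1 - α ^ k) * μ * (1 - s)) :=
        ratio k ih
      simp only [hf]
      rw [show (1 : ℝ) - (1 - α * (1 - f^[k] s) /
            (1 + (1 - α) * μ * (1 - f^[k] s)))
          = α * (1 - f^[k] s) / (1 + (1 - α) * μ * (1 - f^[k] s)) by ring]
      rw [step, ih, ← mul_div_assoc, div_div_div_cancel_right₀]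
      · rw [div_eq_div_iff hDk1.ne' hDk1.ne']
        ring
      · exact hDk.ne'
  have prodkey : ∀ n : ℕ,
      ∏ k ∈ Finset.range n, (1 + (1 - α) * μ * (1 - f^[k] s))⁻¹
        = (1 + (1 - α ^ n) * μ * (1 - s))⁻¹ := by
    intro n
    induction n with
    | zero => simp
    | succ n ih =>
      rw [Finset.prod_range_succ, ih, ratio n (key n)]
      have hDn := hD n
      have hDn1 := hD (n + 1)
      rw [inv_div]
      field_simp
  have reindex : ∏ j ∈ Finset.Icc 1 h, (1 + (1 - α) * μ * (1 - f^[h - j] s))⁻¹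
      = ∏ k ∈ Finset.range h, (1 + (1 - α) * μ * (1 - f^[k] s))⁻¹ := by
    rw [← Finset.Ico_add_one_right_eq_Icc, Finset.prod_Ico_eq_prod_range]
    norm_num
    rw [← Finset.prod_range_reflect
      (fun k => (1 + (1 - α) * μ * (1 - f^[k] s))) h]
    apply Finset.prod_congr rfl
    intro j hj
    have e : h - (1 + j) = h - 1 - j := by omega
    rw [e]
  rw [reindex, prodkey h]
  have hQ : 0 < 1 + (1 - α ^ h) * μ := by nlinarith [hpow h]
  have hDh := hD h
  have e2 : (1 : ℝ) - (1 - (1 + (1 - α ^ h) * μ)⁻¹) * s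
      = (1 + (1 - α ^ h) * μ * (1 - s)) / (1 + (1 - α ^ h) * μ) := by
    field_simp
    ring
  rw [e2, div_div_eq_mul_div, inv_mul_cancel₀ hQ.ne', one_div]
end

section
/- Let α ∈ (0,1), μ > 0, h ≥ 1. With Ψ_X(s) = (1+μ(1-s))^{-1}, Ψ_ε(s) = (1+(1-α)μ(1-s))^{-1}, and Ψ_G^{(h)} the h-th iterate of Ψ_G(s) = 1-α(1-s)/(1+(1-α)μ(1-s)), one has Ψ_X(Ψ_G^{(h)}(s)) = (1+(1-α^h)μ(1-s))/(1+μ(1-s)) and Ψ_ε(Ψ_G^{(h)}(s)) = (1+(1-α^h)μ(1-s))/(1+(1-α^{h+1})μ(1-s)). -/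
lemma novel_geo_den_pos (α μ u : ℝ) (hα : α ∈ Set.Ioo (0:ℝ) 1) (hμ : 0 < μ)
    (hu : 0 ≤ u) (k : ℕ) : 0 < 1 + (1 - α ^ k) * μ * u := by
  have h1 : α ^ k ≤ 1 := pow_le_one₀ hα.1.le hα.2.le
  have := mul_nonneg (mul_nonneg (sub_nonneg.2 h1) hμ.le) hu
  linarith

lemma novel_geo_iterate (α μ : ℝ) (hα : α ∈ Set.Ioo (0:ℝ) 1) (hμ : 0 < μ) :
    ∀ h : ℕ, ∀ s ∈ Set.Icc (0:ℝ) 1,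
      1 - (fun t : ℝ => 1 - α * (1 - t) / (1 + (1 - α) * μ * (1 - t)))^[h] s
        = α ^ h * (1 - s) / (1 + (1 - α ^ h) * μ * (1 - s)) := by
  intro h
  induction h with
  | zero => intro s hs; simp only [Function.iterate_zero, id_eq, pow_zero, sub_self, zero_mul, add_zero, one_mul, div_one]
  | succ n ih =>
    intro s hs
    have hu : 0 ≤ 1 - s := by linarith [hs.2]
    have ihs := ih s hs
    rw [Function.iterate_succ_apply']
    set y := (fun t : ℝ => 1 - α * (1 - t) / (1 + (1 - α) * μ * (1 - t)))^[n] s with hy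
    beta_reduce
    have hDn := novel_geo_den_pos α μ (1 - s) hα hμ hu n
    have hDn1 := novel_geo_den_pos α μ (1 - s) hα hμ hu (n + 1)
    have key : 1 + (1 - α) * μ * (α ^ n * (1 - s) / (1 + (1 - α ^ n) * μ * (1 - s)))
        = (1 + (1 - α ^ (n + 1)) * μ * (1 - s)) / (1 + (1 - α ^ n) * μ * (1 - s)) := by
      rw [eq_div_iff hDn.ne']
      linear_combination ((1 - α) * μ) * div_mul_cancel₀ (α ^ n * (1 - s)) hDn.ne'
    rw [ihs, key]
    rw [sub_sub_cancel, mul_div_assoc, div_div_div_cancel_right₀ hDn.ne', pow_succ]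
    ring

/-- Composition of the geometric marginal and innovation pgfs with the `h`-th
iterate of the thinning pgf of the novel geometric INAR(1) process. -/
theorem composition_identities_novel_geometric (α μ : ℝ)
    (hα : α ∈ Set.Ioo (0:ℝ) 1) (hμ : 0 < μ) (h : ℕ) (hh : 1 ≤ h) :
    ∀ s ∈ Set.Icc (0:ℝ) 1,
      ((1 + μ * (1 - (fun t : ℝ =>
          1 - α * (1 - t) / (1 + (1 - α) * μ * (1 - t)))^[h] s))⁻¹
        = (1 + (1 - α ^ h) * μ * (1 - s)) / (1 + μ * (1 - s))) ∧
      ((1 + (1 - α) * μ * (1 - (fun t : ℝ =>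
          1 - α * (1 - t) / (1 + (1 - α) * μ * (1 - t)))^[h] s))⁻¹
        = (1 + (1 - α ^ h) * μ * (1 - s))
            / (1 + (1 - α ^ (h + 1)) * μ * (1 - s))) := by
  intro s hs
  have hu : 0 ≤ 1 - s := by linarith [hs.2]
  have hit := novel_geo_iterate α μ hα hμ h s hs
  rw [hit]
  have hDh := novel_geo_den_pos α μ (1 - s) hα hμ hu h
  have hDh1 := novel_geo_den_pos α μ (1 - s) hα hμ hu (h + 1)
  have hD0 := novel_geo_den_pos α μ (1 - s) hα hμ hu 0
  have hmu : (0:ℝ) < 1 + μ * (1 - s) := by nlinarith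
  constructor
  · have e1 : 1 + μ * (α ^ h * (1 - s) / (1 + (1 - α ^ h) * μ * (1 - s)))
        = (1 + μ * (1 - s)) / (1 + (1 - α ^ h) * μ * (1 - s)) := by
      rw [eq_div_iff hDh.ne']; linear_combination μ * div_mul_cancel₀ (α ^ h * (1 - s)) hDh.ne'
    rw [e1, inv_div]
  · have e2 : 1 + (1 - α) * μ * (α ^ h * (1 - s) / (1 + (1 - α ^ h) * μ * (1 - s)))
        = (1 + (1 - α ^ (h + 1)) * μ * (1 - s)) / (1 + (1 - α ^ h) * μ * (1 - s)) := by
      rw [eq_div_iff hDh.ne']; linear_combination ((1 - α) * μ) * div_mul_cancel₀ (α ^ h * (1 - s)) hDh.ne'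
    rw [e2, inv_div]
end

section
/- Let r > 0, β, θ ∈ (0,1). Define Ψ_X(s) = ((1-θ)/(1-θs))^r, Ψ_ε(s) = ((1-(1-β)θ)/(1-(1-β)θ s))^r, and Ψ_{β,θ}(s) = 1 - β(1-s)/(1-(1-β)θ s). Then Ψ_X(s) = Ψ_X(Ψ_{β,θ}(s)) · Ψ_ε(s) for all s in [0,1]. -/
open Real

/-- The functional equation `Ψ_X(s) = Ψ_X(Ψ_{β,θ}(s)) Ψ_ε(s)` for the NB1(r,θ)
INAR(1) model of Al-Osh and Bouzar. -/
theorem functional_eq_NB1 (r β θ : ℝ)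
    (hr : 0 < r) (hβ : β ∈ Set.Ioo (0:ℝ) 1) (hθ : θ ∈ Set.Ioo (0:ℝ) 1) :
    ∀ s ∈ Set.Icc (0:ℝ) 1,
      ((1 - θ) / (1 - θ * s)) ^ r
        = ((1 - θ) / (1 - θ * (1 - β * (1 - s) / (1 - (1 - β) * θ * s)))) ^ r
          * ((1 - (1 - β) * θ) / (1 - (1 - β) * θ * s)) ^ r := by
  obtain ⟨hβ0, hβ1⟩ := hβ
  obtain ⟨hθ0, hθ1⟩ := hθ
  intro s hs
  obtain ⟨hs0, hs1⟩ := hs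
  have ha0 : 0 < (1 - β) * θ := by nlinarith
  have ha1 : (1 - β) * θ < 1 := by nlinarith
  have hD : 0 < 1 - (1 - β) * θ * s := by nlinarith
  have hDθ : 0 < 1 - θ * s := by nlinarith
  have hkey : 1 - θ * (1 - β * (1 - s) / (1 - (1 - β) * θ * s))
      = ((1 - θ) * (1 - (1 - β) * θ * s) + θ * β * (1 - s)) / (1 - (1 - β) * θ * s) := by
    rw [eq_div_iff hD.ne']
    linear_combination θ * (div_mul_cancel₀ (β * (1 - s)) hD.ne')
  have hΨ : 0 < 1 - θ * (1 - β * (1 - s) / (1 - (1 - β) * θ * s)) := by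
    rw [hkey]
    apply div_pos _ hD
    nlinarith
  have hN : 0 < (1 - θ) * (1 - (1 - β) * θ * s) + θ * β * (1 - s) := by nlinarith
  rw [← Real.mul_rpow (div_nonneg (by linarith) hΨ.le) (div_nonneg (by nlinarith) hD.le)]
  congr 1
  rw [hkey]
  rw [div_div_eq_mul_div, div_mul_div_comm, div_eq_div_iff hDθ.ne' (mul_ne_zero hN.ne' hD.ne')]
  ring
end

section
/- Let α ∈ (0,1), μ > 0, r > 0, and set β = αr/(r+(1-α)μ) and θ = μ/(μ+r). Then β ∈ (0,1), θ ∈ (0,1), and 1 - β(1-s)/(1-(1-β)θs) = 1 - α(1-s)/(1+r^{-1}(1-α)μ(1-s)) for all s. Conversely, given β,θ ∈ (0,1) and r > 0, setting α = β/(1-(1-β)θ) and μ = θr/(1-θ) recovers the same identity. -/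
/-- Equivalence of the `(α,μ,r)`-star thinning pgf of Guerrero et al. and the
`(β,θ)`-expectation thinning pgf of Al-Osh and Bouzar via reparameterization,
in both directions. -/
theorem star_odot_NB_reparameterization :
    (∀ α μ r : ℝ, α ∈ Set.Ioo (0:ℝ) 1 → 0 < μ → 0 < r →
      (α * r / (r + (1 - α) * μ) ∈ Set.Ioo (0:ℝ) 1) ∧
      (μ / (μ + r) ∈ Set.Ioo (0:ℝ) 1) ∧
      (∀ s : ℝ,
        1 - (α * r / (r + (1 - α) * μ)) * (1 - s)
            / (1 - (1 - α * r / (r + (1 - α) * μ)) * (μ / (μ + r)) * s)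
          = 1 - α * (1 - s) / (1 + r⁻¹ * (1 - α) * μ * (1 - s)))) ∧
    (∀ β θ r : ℝ, β ∈ Set.Ioo (0:ℝ) 1 → θ ∈ Set.Ioo (0:ℝ) 1 → 0 < r →
      ∀ s : ℝ,
        1 - β * (1 - s) / (1 - (1 - β) * θ * s)
          = 1 - (β / (1 - (1 - β) * θ)) * (1 - s)
              / (1 + r⁻¹ * (1 - β / (1 - (1 - β) * θ))
                  * (θ * r / (1 - θ)) * (1 - s))) := by
  constructor
  · intro α μ r hα hμ hr
    obtain ⟨hα0, hα1⟩ := hα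
    have h1α : 0 < 1 - α := by linarith
    have hD : 0 < r + (1 - α) * μ := by positivity
    have hμr : 0 < μ + r := by linarith
    refine ⟨⟨by positivity, ?_⟩, ⟨by positivity, ?_⟩, ?_⟩
    · rw [div_lt_one hD]; nlinarith
    · rw [div_lt_one hμr]; linarith
    · intro s
      have e1 : 1 - (1 - α * r / (r + (1 - α) * μ)) * (μ / (μ + r)) * s
          = (r + (1 - α) * μ - (1 - α) * μ * s) / (r + (1 - α) * μ) := by
        field_simp
        ring
      have e2 : 1 + r⁻¹ * (1 - α) * μ * (1 - s)
          = (r + (1 - α) * μ - (1 - α) * μ * s) / r := by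
        field_simp
        ring
      rw [e1, e2, div_div_eq_mul_div, div_div_eq_mul_div]
      have e3 : α * r / (r + (1 - α) * μ) * (1 - s) * (r + (1 - α) * μ)
          = α * (1 - s) * r := by
        field_simp
      rw [e3]
  · intro β θ r hβ hθ hr
    obtain ⟨hβ0, hβ1⟩ := hβ
    obtain ⟨hθ0, hθ1⟩ := hθ
    have h1θ : 0 < 1 - θ := by linarith
    have hQ : 0 < 1 - (1 - β) * θ := by nlinarith
    intro s
    have e2 : 1 + r⁻¹ * (1 - β / (1 - (1 - β) * θ)) * (θ * r / (1 - θ)) * (1 - s)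
        = (1 - (1 - β) * θ * s) / (1 - (1 - β) * θ) := by
      field_simp
      ring
    rw [e2, div_div_eq_mul_div]
    have e3 : β / (1 - (1 - β) * θ) * (1 - s) * (1 - (1 - β) * θ)
        = β * (1 - s) := by
      field_simp
    rw [e3]
end

section
/- Let β, θ ∈ (0,1) and define β_h = β^h(1-θ)/((1-(1-β)θ)^h - β^h θ) for h ≥ 1, with β_0 = 1 and Ψ_{β,θ}(s) = 1-β(1-s)/(1-(1-β)θ s). Then for every h ≥ 1, the h-fold composition of Ψ_{β,θ} with itself equals Ψ_{β_h,θ}(s) = 1 - β_h(1-s)/(1-(1-β_h)θ s). -/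
/-- Iterates of the expectation-thinning pgf `Ψ_{β,θ}` form the same family with
parameter `β_h = β^h(1-θ)/((1-(1-β)θ)^h - β^h θ)`. -/
theorem odot_pgf_iterates (β θ : ℝ)
    (hβ : β ∈ Set.Ioo (0:ℝ) 1) (hθ : θ ∈ Set.Ioo (0:ℝ) 1) (h : ℕ) (hh : 1 ≤ h) :
    ∀ s ∈ Set.Icc (0:ℝ) 1,
      (fun t : ℝ => 1 - β * (1 - t) / (1 - (1 - β) * θ * t))^[h] s
        = 1 - (β ^ h * (1 - θ) / ((1 - (1 - β) * θ) ^ h - β ^ h * θ)) * (1 - s)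
            / (1 - (1 - β ^ h * (1 - θ) / ((1 - (1 - β) * θ) ^ h - β ^ h * θ))
                * θ * s) := by
  obtain ⟨hβ0, hβ1⟩ := hβ
  obtain ⟨hθ0, hθ1⟩ := hθ
  intro s hs
  obtain ⟨hs0, hs1⟩ := hs
  have hAβ : β < 1 - (1 - β) * θ := by nlinarith
  have hA0 : (0:ℝ) < 1 - (1 - β) * θ := lt_trans hβ0 hAβ
  have hpow : ∀ n : ℕ, β ^ n ≤ (1 - (1 - β) * θ) ^ n := fun n =>
    pow_le_pow_left₀ hβ0.le hAβ.le n
  have hV : ∀ n : ℕ,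
      0 < (1 - (1 - β) * θ) ^ n * (1 - θ * s) - β ^ n * θ * (1 - s) := by
    intro n
    have h1 := hpow n
    have h2 : 0 < β ^ n := pow_pos hβ0 n
    have h3 : 0 ≤ 1 - θ * s := by nlinarith
    have h4 : β ^ n * (1 - θ * s) ≤ (1 - (1 - β) * θ) ^ n * (1 - θ * s) :=
      mul_le_mul_of_nonneg_right h1 h3
    nlinarith
  have key : ∀ n : ℕ,
      (fun t : ℝ => 1 - β * (1 - t) / (1 - (1 - β) * θ * t))^[n] s
        = 1 - β ^ n * (1 - θ) * (1 - s)
            / ((1 - (1 - β) * θ) ^ n * (1 - θ * s) - β ^ n * θ * (1 - s)) := by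
    intro n
    induction n with
    | zero =>
      simp only [Function.iterate_zero, id_eq, pow_zero, one_mul]
      have hθ' : (1:ℝ) - θ ≠ 0 := by nlinarith
      rw [show (1 - θ * s) - θ * (1 - s) = 1 - θ by ring]
      field_simp
      ring
    | succ n ih =>
      rw [Function.iterate_succ_apply', ih]
      have hVn := hV n
      have hVsn := hV (n + 1)
      have hu : 0 ≤ β ^ n * (1 - θ) * (1 - s) :=
        mul_nonneg (mul_nonneg (pow_pos hβ0 n).le (by linarith)) (by linarith)
      have hmid : 1 - (1 - β) * θ *
          (1 - β ^ n * (1 - θ) * (1 - s)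
            / ((1 - (1 - β) * θ) ^ n * (1 - θ * s) - β ^ n * θ * (1 - s)))
          = ((1 - (1 - β) * θ) *
              ((1 - (1 - β) * θ) ^ n * (1 - θ * s) - β ^ n * θ * (1 - s))
              + (1 - β) * θ * (β ^ n * (1 - θ) * (1 - s)))
            / ((1 - (1 - β) * θ) ^ n * (1 - θ * s) - β ^ n * θ * (1 - s)) := by
        rw [eq_div_iff hVn.ne']
        have key2 : β ^ n * (1 - θ) * (1 - s)
            / ((1 - (1 - β) * θ) ^ n * (1 - θ * s) - β ^ n * θ * (1 - s))
            * ((1 - (1 - β) * θ) ^ n * (1 - θ * s) - β ^ n * θ * (1 - s))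
            = β ^ n * (1 - θ) * (1 - s) := div_mul_cancel₀ _ hVn.ne'
        linear_combination ((1 - β) * θ) * key2
      have hmidpos : 0 < (1 - (1 - β) * θ) *
          ((1 - (1 - β) * θ) ^ n * (1 - θ * s) - β ^ n * θ * (1 - s))
          + (1 - β) * θ * (β ^ n * (1 - θ) * (1 - s)) := by
        have : 0 < (1 - (1 - β) * θ) *
            ((1 - (1 - β) * θ) ^ n * (1 - θ * s) - β ^ n * θ * (1 - s)) :=
          mul_pos hA0 hVn
        have h5 : 0 ≤ (1 - β) * θ * (β ^ n * (1 - θ) * (1 - s)) :=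
          mul_nonneg (mul_nonneg (by linarith) hθ0.le) hu
        linarith
      rw [hmid]
      rw [div_div_eq_mul_div]
      rw [sub_sub_cancel, mul_assoc β, div_mul_cancel₀ _ hVn.ne']
      congr 1
      rw [div_eq_div_iff hmidpos.ne' hVsn.ne']
      ring
  rw [key h]
  have hD : 0 < (1 - (1 - β) * θ) ^ h - β ^ h * θ := by
    have h1 := hpow h
    have h2 : 0 < β ^ h := pow_pos hβ0 h
    nlinarith
  have hVh := hV h
  have hden : 1 - (1 - β ^ h * (1 - θ) / ((1 - (1 - β) * θ) ^ h - β ^ h * θ)) * θ * s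
      = ((1 - (1 - β) * θ) ^ h * (1 - θ * s) - β ^ h * θ * (1 - s))
        / ((1 - (1 - β) * θ) ^ h - β ^ h * θ) := by
    rw [eq_div_iff hD.ne']
    have key3 : β ^ h * (1 - θ) / ((1 - (1 - β) * θ) ^ h - β ^ h * θ)
        * ((1 - (1 - β) * θ) ^ h - β ^ h * θ) = β ^ h * (1 - θ) := div_mul_cancel₀ _ hD.ne'
    linear_combination (θ * s) * key3
  rw [hden]
  rw [div_div_eq_mul_div]
  congr 1
  congr 1
  have key4 : β ^ h * (1 - θ) / ((1 - (1 - β) * θ) ^ h - β ^ h * θ)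
      * ((1 - (1 - β) * θ) ^ h - β ^ h * θ) = β ^ h * (1 - θ) := div_mul_cancel₀ _ hD.ne'
  linear_combination (-(1 - s)) * key4
end

section
/- Let β, θ ∈ (0,1), r > 0, β_h as defined by β_h = β^h(1-θ)/((1-(1-β)θ)^h - β^h θ) with β_0 = 1, and Ψ_ε(s) = ((1-(1-β)θ)/(1-(1-β)θ s))^r. Then ∏_{j=1}^{h} Ψ_ε(Ψ_{β_{h-j},θ}(s)) = ((1-(1-β_h)θ)/(1-(1-β_h)θ s))^r, i.e., the h-step accumulated innovation of the NB1(r,θ) INAR(1) process is NB1(r,(1-β_h)θ). -/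
open Real

set_option maxHeartbeats 1000000 in
/-- The `h`-step accumulated innovation of the NB1(r,θ) INAR(1) process is
NB1(r,(1-β_h)θ): the telescoping product identity for the innovation pgf
composed with the iterated thinning pgfs, where
`β_l = β^l(1-θ)/((1-(1-β)θ)^l - β^l θ)` (so `β_0 = 1`). -/
theorem accumulated_innovation_NB1 (β θ r : ℝ)
    (hβ : β ∈ Set.Ioo (0:ℝ) 1) (hθ : θ ∈ Set.Ioo (0:ℝ) 1) (hr : 0 < r)
    (B : ℕ → ℝ)
    (hB : ∀ l : ℕ, B l = β ^ l * (1 - θ) / ((1 - (1 - β) * θ) ^ l - β ^ l * θ))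
    (h : ℕ) (hh : 1 ≤ h) :
    ∀ s ∈ Set.Icc (0:ℝ) 1,
      (∏ j ∈ Finset.Icc 1 h,
        ((1 - (1 - β) * θ)
          / (1 - (1 - β) * θ *
              (1 - B (h - j) * (1 - s) / (1 - (1 - B (h - j)) * θ * s)))) ^ r)
        = ((1 - (1 - B h) * θ) / (1 - (1 - B h) * θ * s)) ^ r := by
  obtain ⟨hβ0, hβ1⟩ := hβ
  obtain ⟨hθ0, hθ1⟩ := hθ
  intro s hs
  obtain ⟨hs0, hs1⟩ := hs
  have hc : 0 < 1 - (1 - β) * θ := by nlinarith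
  have hβc : β ≤ 1 - (1 - β) * θ := by nlinarith
  have hd : ∀ l : ℕ, 0 < (1 - (1 - β) * θ) ^ l - β ^ l * θ := by
    intro l
    have h1 : β ^ l ≤ (1 - (1 - β) * θ) ^ l := pow_le_pow_left₀ hβ0.le hβc l
    have h2 : 0 < β ^ l := pow_pos hβ0 l
    nlinarith
  have hB0 : ∀ l : ℕ, 0 < B l := by
    intro l
    rw [hB]
    exact div_pos (mul_pos (pow_pos hβ0 l) (by linarith)) (hd l)
  have hB1' : ∀ l : ℕ, B l ≤ 1 := by
    intro l
    rw [hB, div_le_one (hd l)]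
    have h1 : β ^ l ≤ (1 - (1 - β) * θ) ^ l := pow_le_pow_left₀ hβ0.le hβc l
    nlinarith
  have hDθ : ∀ l : ℕ, 0 < 1 - (1 - B l) * θ := by
    intro l
    nlinarith [hB0 l]
  have hD : ∀ l : ℕ, 0 < 1 - (1 - B l) * θ * s := by
    intro l
    have h1 : (0:ℝ) ≤ 1 - B l := by linarith [hB1' l]
    nlinarith [hDθ l, mul_nonneg (mul_nonneg h1 hθ0.le) (by linarith : (0:ℝ) ≤ 1 - s)]
  have hE : ∀ l : ℕ,
      0 < 1 - (1 - β) * θ * (1 - B l * (1 - s) / (1 - (1 - B l) * θ * s)) := by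
    intro l
    have h1 : 0 ≤ B l * (1 - s) / (1 - (1 - B l) * θ * s) :=
      div_nonneg (by nlinarith [hB0 l]) (hD l).le
    nlinarith [mul_nonneg (mul_nonneg (by linarith : (0:ℝ) ≤ 1 - β) hθ0.le) h1]
  -- the telescoping step
  have key : ∀ l : ℕ,
      ((1 - (1 - B l) * θ) / (1 - (1 - B l) * θ * s)) *
        ((1 - (1 - β) * θ) /
          (1 - (1 - β) * θ * (1 - B l * (1 - s) / (1 - (1 - B l) * θ * s))))
      = (1 - (1 - B (l + 1)) * θ) / (1 - (1 - B (l + 1)) * θ * s) := by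
    intro l
    have n1 := (hd l).ne'
    have n2 := (hd (l + 1)).ne'
    have n3 := (hD l).ne'
    have hDE : (1 - (1 - B l) * θ * s) *
        (1 - (1 - β) * θ * (1 - B l * (1 - s) / (1 - (1 - B l) * θ * s)))
        = (1 - (1 - B l) * θ * s) - (1 - β) * θ * ((1 - (1 - B l) * θ * s) - B l * (1 - s)) := by
      field_simp
    rw [div_mul_div_comm, div_eq_div_iff (mul_pos (hD l) (hE l)).ne' (hD (l + 1)).ne', hDE]
    simp only [hB, pow_succ] at n2 ⊢
    generalize (1 - (1 - β) * θ) ^ l = u at *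
    generalize β ^ l = v at *
    have n2' : u * (1 - θ * (1 - β)) - v * θ * β ≠ 0 := by
      intro e; exact n2 (by linear_combination e)
    field_simp
    ring
  -- product over range
  have prod_eq : ∀ n : ℕ,
      (∏ l ∈ Finset.range n,
        ((1 - (1 - β) * θ) /
          (1 - (1 - β) * θ * (1 - B l * (1 - s) / (1 - (1 - B l) * θ * s)))))
      = (1 - (1 - B n) * θ) / (1 - (1 - B n) * θ * s) := by
    intro n
    induction n with
    | zero =>
      have hθ' : (1:ℝ) - θ ≠ 0 := by linarith
      have hB0' : B 0 = 1 := by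
        rw [hB]
        simp [hθ']
      simp [hB0']
    | succ n ih =>
      rw [Finset.prod_range_succ, ih, key n]
  -- reindex the given product
  have reindex :
      (∏ j ∈ Finset.Icc 1 h,
        ((1 - (1 - β) * θ) /
          (1 - (1 - β) * θ *
            (1 - B (h - j) * (1 - s) / (1 - (1 - B (h - j)) * θ * s)))))
      = (∏ l ∈ Finset.range h,
        ((1 - (1 - β) * θ) /
          (1 - (1 - β) * θ * (1 - B l * (1 - s) / (1 - (1 - B l) * θ * s))))) := by
    rw [← Finset.Ico_add_one_right_eq_Icc, Finset.prod_Ico_eq_prod_range]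
    rw [← Finset.prod_range_reflect]
    apply Finset.prod_congr (by norm_num)
    intro i hi
    simp only [Finset.mem_range] at hi
    rw [show h - (1 + (h + 1 - 1 - 1 - i)) = i from by omega]
  calc (∏ j ∈ Finset.Icc 1 h,
        ((1 - (1 - β) * θ) /
          (1 - (1 - β) * θ *
            (1 - B (h - j) * (1 - s) / (1 - (1 - B (h - j)) * θ * s)))) ^ r)
      = (∏ j ∈ Finset.Icc 1 h,
        ((1 - (1 - β) * θ) /
          (1 - (1 - β) * θ *
            (1 - B (h - j) * (1 - s) / (1 - (1 - B (h - j)) * θ * s))))) ^ r := by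
        apply Real.finset_prod_rpow
        intro j _
        exact (div_pos hc (hE (h - j))).le
    _ = ((1 - (1 - B h) * θ) / (1 - (1 - B h) * θ * s)) ^ r := by
        rw [reindex, prod_eq h]
end

section
/- Let β, θ ∈ (0,1), r > 0, and for l ≥ 0 let β_l = β^l(1-θ)/((1-(1-β)θ)^l - β^l θ) (with β_0 = 1). Then for every l ≥ 1, Ψ_ε(Ψ_{β_l,θ}(s)) = ((1-(1-β_{l+1})θ)/(1-(1-β_l)θ) · (1-(1-β_l)θ s)/(1-(1-β_{l+1})θ s))^r, where Ψ_ε(s) = ((1-(1-β)θ)/(1-(1-β)θ s))^r and Ψ_{β_l,θ}(s) = 1-β_l(1-s)/(1-(1-β_l)θ s). -/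
set_option maxHeartbeats 1000000


open Real

/-- Single-step composition identity for the innovation pgf with the iterated
thinning pgf in the NB1(r,θ) INAR(1) model, where
`β_l = β^l(1-θ)/((1-(1-β)θ)^l - β^l θ)`. -/
theorem single_step_composition_NB1 (β θ r : ℝ)
    (hβ : β ∈ Set.Ioo (0:ℝ) 1) (hθ : θ ∈ Set.Ioo (0:ℝ) 1) (hr : 0 < r)
    (B : ℕ → ℝ)
    (hB : ∀ l : ℕ, B l = β ^ l * (1 - θ) / ((1 - (1 - β) * θ) ^ l - β ^ l * θ))
    (l : ℕ) (hl : 1 ≤ l) :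
    ∀ s ∈ Set.Icc (0:ℝ) 1,
      ((1 - (1 - β) * θ)
        / (1 - (1 - β) * θ *
            (1 - B l * (1 - s) / (1 - (1 - B l) * θ * s)))) ^ r
        = ((1 - (1 - B (l + 1)) * θ) / (1 - (1 - B l) * θ)
            * ((1 - (1 - B l) * θ * s) / (1 - (1 - B (l + 1)) * θ * s))) ^ r := by
  obtain ⟨hβ0, hβ1⟩ := hβ
  obtain ⟨hθ0, hθ1⟩ := hθ
  intro s hs
  obtain ⟨hs0, hs1⟩ := hs
  have hD : ∀ n : ℕ, 0 < (1 - (1 - β) * θ) ^ n - β ^ n * θ := by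
    intro n
    have h1 : β ^ n ≤ (1 - (1 - β) * θ) ^ n :=
      pow_le_pow_left₀ hβ0.le (by nlinarith) n
    have h2 : 0 < β ^ n := pow_pos hβ0 n
    nlinarith
  have hBpos : ∀ n, 0 < B n := by
    intro n; rw [hB n]
    exact div_pos (mul_pos (pow_pos hβ0 n) (by linarith)) (hD n)
  have hBle : ∀ n, B n ≤ 1 := by
    intro n; rw [hB n, div_le_one (hD n)]
    have h1 : β ^ n ≤ (1 - (1 - β) * θ) ^ n :=
      pow_le_pow_left₀ hβ0.le (by nlinarith) n
    nlinarith
  have hden : ∀ n, 0 < 1 - (1 - B n) * θ * s := by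
    intro n
    have h1 := hBpos n; have h2 := hBle n
    nlinarith [mul_nonneg (mul_nonneg h1.le hθ0.le) hs0,
      mul_le_of_le_one_right hθ0.le hs1]
  have hden' : ∀ n, 0 < 1 - (1 - B n) * θ := by
    intro n
    have h1 := hBpos n; have h2 := hBle n
    nlinarith
  have hq : 0 ≤ B l * (1 - s) / (1 - (1 - B l) * θ * s) :=
    div_nonneg (mul_nonneg (hBpos l).le (by linarith)) (hden l).le
  have hbig : 0 < 1 - (1 - β) * θ *
      (1 - B l * (1 - s) / (1 - (1 - B l) * θ * s)) := by
    have hc : 0 ≤ (1 - β) * θ := by nlinarith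
    nlinarith
  have key : (1 - (1 - β) * θ)
        / (1 - (1 - β) * θ *
            (1 - B l * (1 - s) / (1 - (1 - B l) * θ * s)))
        = (1 - (1 - B (l + 1)) * θ) / (1 - (1 - B l) * θ)
            * ((1 - (1 - B l) * θ * s) / (1 - (1 - B (l + 1)) * θ * s)) := by
    set c := (1 - β) * θ with hc_def
    set q := B l * (1 - s) with hq_def
    set d := 1 - (1 - B l) * θ * s with hd_def
    have hc0 : 0 ≤ c := by nlinarith
    have hc1 : c < 1 := by nlinarith
    have hd : 0 < d := hden l
    have hq0 : 0 ≤ q := mul_nonneg (hBpos l).le (by linarith)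
    have hN : 0 < d - c * (d - q) := by
      nlinarith [mul_nonneg hc0 hq0, mul_pos hd (sub_pos.mpr hc1)]
    have e1 : 1 - c * (1 - q / d) = (d - c * (d - q)) / d := by
      rw [eq_div_iff hd.ne']; field_simp
    rw [e1, div_div_eq_mul_div, div_mul_div_comm,
      div_eq_div_iff hN.ne' (mul_ne_zero (hden' l).ne' (hden (l + 1)).ne')]
    simp only [hq_def, hd_def, hc_def, hB, pow_succ]
    have h1 := (hD l).ne'
    have h2 := (hD (l + 1)).ne'
    simp only [pow_succ] at h2
    simp only [hc_def] at h1 h2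
    generalize hx : (1 - (1 - β) * θ) ^ l = x at h1 h2 ⊢
    generalize hy : β ^ l = y at h1 h2 ⊢
    field_simp [h1, h2, show x - θ * y ≠ 0 from fun h => h1 (by linarith),
      show (1 - (1 - β) * θ) * x - β * θ * y ≠ 0 from fun h => h2 (by linarith)]
    ring
  rw [key]
end

section
/- Let α ∈ (0,1), μ > 0, r > 0, h ≥ 1 and set β = αr/(r+(1-α)μ), θ = μ/(μ+r), β_h = β^h(1-θ)/((1-(1-β)θ)^h - β^h θ), and q̃_h = r/(r+(1-α^h)μ). Then 1-(1-β_h)θ = q̃_h, β_h = α^h q̃_h, (1-β_h)θ = 1-q̃_h, and 1-β_h = 1-α^h q̃_h. -/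
/-- Translation formulas between the `(β,θ)` parameterization of Al-Osh and
Bouzar and the `(α,μ,r)` parameterization of Guerrero et al. for the `h`-step
quantities `β_h` and `q̃_h`. -/
theorem h_step_parameter_translation (α μ r : ℝ)
    (hα : α ∈ Set.Ioo (0:ℝ) 1) (hμ : 0 < μ) (hr : 0 < r)
    (h : ℕ) (hh : 1 ≤ h)
    (β θ βh qh : ℝ)
    (hβ : β = α * r / (r + (1 - α) * μ))
    (hθ : θ = μ / (μ + r))
    (hβh : βh = β ^ h * (1 - θ) / ((1 - (1 - β) * θ) ^ h - β ^ h * θ))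
    (hqh : qh = r / (r + (1 - α ^ h) * μ)) :
    1 - (1 - βh) * θ = qh ∧ βh = α ^ h * qh ∧
    (1 - βh) * θ = 1 - qh ∧ 1 - βh = 1 - α ^ h * qh := by
  obtain ⟨hα0, hα1⟩ := hα
  have hαh : α ^ h < 1 := pow_lt_one₀ hα0.le hα1 (by omega)
  have hD : (0:ℝ) < r + (1 - α) * μ := by
    have : 0 < (1 - α) * μ := mul_pos (by linarith) hμ
    linarith
  have hE : (0:ℝ) < r + (1 - α ^ h) * μ := by
    have : 0 < (1 - α ^ h) * μ := mul_pos (by linarith) hμ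
    linarith
  have hMR : (0:ℝ) < μ + r := by linarith
  have key1 : 1 - (1 - β) * θ = r / (r + (1 - α) * μ) := by
    rw [hβ, hθ]; field_simp; ring
  have hden : (1 - (1 - β) * θ) ^ h - β ^ h * θ
      = r ^ h / (r + (1 - α) * μ) ^ h * ((r + (1 - α ^ h) * μ) / (μ + r)) := by
    rw [key1, hβ, hθ, div_pow, div_pow, mul_pow]
    field_simp
    ring
  have hnum : β ^ h * (1 - θ)
      = r ^ h / (r + (1 - α) * μ) ^ h * (α ^ h * r / (μ + r)) := by
    rw [hβ, hθ, div_pow, mul_pow]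
    field_simp
    ring
  have hbh : βh = α ^ h * r / (r + (1 - α ^ h) * μ) := by
    rw [hβh, hden, hnum]
    rw [mul_div_mul_left _ _ (by positivity : r ^ h / (r + (1 - α) * μ) ^ h ≠ 0)]
    rw [div_div_div_eq]
    rw [mul_comm (μ + r), mul_div_mul_right _ _ hMR.ne']
  have hq : qh = r / (r + (1 - α ^ h) * μ) := hqh
  refine ⟨?_, ?_, ?_, ?_⟩ <;> simp only [hbh, hθ, hq] <;> field_simp <;> ring
end

section
/- Let α ∈ (0,1), μ > 0, r > 0, and X ∼ NB(r,μ) with pgf Ψ_X(s) = (1+μr^{-1}(1-s))^{-r}. Suppose the pgf of X_{t+1} given X_t = x is Ψ_G(s)^x Ψ_ε(s) with Ψ_G(s) = 1-α(1-s)/(1+r^{-1}(1-α)μ(1-s)) and Ψ_ε(s) = (1+(1-α)μr^{-1}(1-s))^{-r}. Then the conditional variance is Var(X_{t+1}|X_t=x) = α(1-α)(2μr^{-1}+1)x + (1-α)μ(1+r^{-1}(1-α)μ). -/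
open Real

/-- Conditional variance of `X_{t+1}` given `X_t = x` in the novel negative
binomial INAR(1) model: with `f` the conditional pgf `Ψ_G(s)^x Ψ_ε(s)`, the
variance `f''(1) + f'(1) - f'(1)²` equals `α(1-α)(2μ/r+1)x + (1-α)μ(1+(1-α)μ/r)`. -/
theorem conditional_variance_novel_NB (α μ r : ℝ)
    (hα : α ∈ Set.Ioo (0:ℝ) 1) (hμ : 0 < μ) (hr : 0 < r) (x : ℕ)
    (f : ℝ → ℝ)
    (hf : f = fun s : ℝ =>
      (1 - α * (1 - s) / (1 + r⁻¹ * (1 - α) * μ * (1 - s))) ^ x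
        * (1 + (1 - α) * μ * r⁻¹ * (1 - s)) ^ (-r)) :
    deriv (deriv f) 1 + deriv f 1 - (deriv f 1) ^ 2
      = α * (1 - α) * (2 * μ * r⁻¹ + 1) * x
        + (1 - α) * μ * (1 + r⁻¹ * (1 - α) * μ) := by
  obtain ⟨hα0, hα1⟩ := hα
  set c : ℝ := r⁻¹ * (1 - α) * μ with hc
  have hfe : f = fun s : ℝ =>
      (1 - α * (1 - s) / (1 + c * (1 - s))) ^ x * (1 + c * (1 - s)) ^ (-r) := by
    rw [hf]; funext s
    congr 2
    rw [hc]; ring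
  set f₁ : ℝ → ℝ := fun s =>
    (x : ℝ) * (1 - α * (1 - s) / (1 + c * (1 - s))) ^ (x - 1)
        * (α / (1 + c * (1 - s)) ^ 2) * (1 + c * (1 - s)) ^ (-r)
      + (1 - α * (1 - s) / (1 + c * (1 - s))) ^ x
        * (r * c * (1 + c * (1 - s)) ^ (-r - 1)) with hf₁
  -- basic building blocks
  have h1 : ∀ s : ℝ, HasDerivAt (fun t : ℝ => 1 - t) (-1) s := fun s => by
    simpa using (hasDerivAt_id s).const_sub 1
  have hA : ∀ s : ℝ, HasDerivAt (fun t : ℝ => 1 + c * (1 - t)) (-c) s := fun s => by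
    have := ((h1 s).const_mul c).const_add 1
    refine HasDerivAt.congr_deriv this ?_; symm; ring
  have hG : ∀ s : ℝ, (1 + c * (1 - s)) ≠ 0 →
      HasDerivAt (fun t : ℝ => 1 - α * (1 - t) / (1 + c * (1 - t)))
        (α / (1 + c * (1 - s)) ^ 2) s := by
    intro s hne
    have hnum : HasDerivAt (fun t : ℝ => α * (1 - t)) (-α) s := by
      have := (h1 s).const_mul α
      refine HasDerivAt.congr_deriv this ?_; symm; ring
    have hq := hnum.div (hA s) hne
    have := hq.const_sub 1
    refine HasDerivAt.congr_deriv this ?_; symm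
    field_simp
    ring
  -- derivative of f on the set where 1 + c*(1-s) > 0
  have hderiv : ∀ s : ℝ, 0 < 1 + c * (1 - s) → HasDerivAt f (f₁ s) s := by
    intro s hs
    have hne : (1 + c * (1 - s)) ≠ 0 := ne_of_gt hs
    have hGx := (hG s hne).pow x
    have hE := (hA s).rpow_const (p := -r) (Or.inl hne)
    have hfd := hGx.mul hE
    rw [hfe]
    refine HasDerivAt.congr_deriv hfd ?_; symm
    rw [hf₁]
    simp only [Pi.pow_apply]
    ring
  have hcpos : 0 < c := by
    have h1α : 0 < 1 - α := by linarith
    rw [hc]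
    positivity
  have hopen : IsOpen {s : ℝ | 0 < 1 + c * (1 - s)} :=
    isOpen_lt continuous_const (by continuity)
  have hmem : {s : ℝ | 0 < 1 + c * (1 - s)} ∈ nhds (1 : ℝ) :=
    hopen.mem_nhds (by norm_num)
  have hev : deriv f =ᶠ[nhds (1:ℝ)] f₁ := by
    filter_upwards [hmem] with s hs using (hderiv s hs).deriv
  have key1 : deriv (deriv f) 1 = deriv f₁ 1 := hev.deriv_eq
  have key0 : deriv f 1 = (x : ℝ) * α + r * c := by
    rw [(hderiv 1 (by norm_num)).deriv, hf₁]
    norm_num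
  -- second derivative at 1
  have hone : ((1:ℝ) + c * (1 - 1)) ≠ 0 := by norm_num
  have hG1 : HasDerivAt (fun t : ℝ => 1 - α * (1 - t) / (1 + c * (1 - t))) α 1 := by
    have := hG 1 hone
    refine HasDerivAt.congr_deriv this ?_; symm
    norm_num
  have hA1 := hA 1
  have h_a : HasDerivAt
      (fun s : ℝ => (x : ℝ) * (1 - α * (1 - s) / (1 + c * (1 - s))) ^ (x - 1))
      ((x : ℝ) * (((x - 1 : ℕ) : ℝ) * α)) 1 := by
    have := (hG1.pow (x - 1)).const_mul (x : ℝ)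
    refine HasDerivAt.congr_deriv this ?_; symm
    norm_num
  have h_b : HasDerivAt (fun s : ℝ => α / (1 + c * (1 - s)) ^ 2) (2 * (α * c)) 1 := by
    have hA2 := hA1.pow 2
    have := (hasDerivAt_const (1:ℝ) α).div hA2 (by norm_num)
    refine HasDerivAt.congr_deriv this ?_; symm
    norm_num
    ring
  have h_c : HasDerivAt (fun s : ℝ => (1 + c * (1 - s)) ^ (-r)) (r * c) 1 := by
    have := hA1.rpow_const (p := -r) (Or.inl hone)
    refine HasDerivAt.congr_deriv this ?_; symm
    norm_num [Real.one_rpow]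
    ring
  have h_d : HasDerivAt (fun s : ℝ => r * c * (1 + c * (1 - s)) ^ (-r - 1))
      (r * c * ((r + 1) * c)) 1 := by
    have := (hA1.rpow_const (p := -r - 1) (Or.inl hone)).const_mul (r * c)
    refine HasDerivAt.congr_deriv this ?_; symm
    norm_num [Real.one_rpow]
    ring
  have hGx1 : HasDerivAt (fun s : ℝ => (1 - α * (1 - s) / (1 + c * (1 - s))) ^ x)
      ((x : ℝ) * α) 1 := by
    have := hG1.pow x
    refine HasDerivAt.congr_deriv this ?_; symm
    norm_num
  have hf₁d : HasDerivAt f₁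
      ((x : ℝ) * (((x - 1 : ℕ) : ℝ) * α) * α + (x : ℝ) * (2 * (α * c))
        + (x : ℝ) * α * (r * c) + ((x : ℝ) * α * (r * c) + r * c * ((r + 1) * c))) 1 := by
    have hT1 := (h_a.mul h_b).mul h_c
    have hT2 := hGx1.mul h_d
    have := hT1.add hT2
    rw [hf₁]
    refine HasDerivAt.congr_deriv this ?_; symm
    norm_num [Real.one_rpow]
  rw [key1, hf₁d.deriv, key0]
  rcases x with _ | n
  · norm_num
    rw [hc]
    field_simp
    ring
  · simp only [Nat.succ_sub_one]
    push_cast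
    rw [hc]
    field_simp
    ring
end

section
/- Let α ∈ (0,1), μ > 0, r > 0. Define φ(s₁,s₂) = [r^{-2}((r+μ)(r+(1-α)μ) - (1-α)μ(r+μ)(s₁+s₂) + μ((1-α)μ - rα)s₁s₂)]^{-r}. Then φ(s₁,s₂) = φ(s₂,s₁) and φ(s,1) = (1+μr^{-1}(1-s))^{-r}, i.e., the joint pgf of (X_t, X_{t+1}) for the novel NB(r,μ) INAR(1) process is symmetric (time reversibility) with NB(r,μ) marginals. -/
open Real

/-- The joint pgf of `(X_t, X_{t+1})` for the novel NB(r,μ) INAR(1) process is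
symmetric (time reversibility) and has NB(r,μ) marginals. -/
theorem joint_pgf_symmetric_novel_NB (α μ r : ℝ)
    (hα : α ∈ Set.Ioo (0:ℝ) 1) (hμ : 0 < μ) (hr : 0 < r)
    (φ : ℝ → ℝ → ℝ)
    (hφ : φ = fun s₁ s₂ =>
      (r⁻¹ ^ 2 * ((r + μ) * (r + (1 - α) * μ)
        - (1 - α) * μ * (r + μ) * (s₁ + s₂)
        + μ * ((1 - α) * μ - r * α) * s₁ * s₂)) ^ (-r)) :
    (∀ s₁ s₂ : ℝ, φ s₁ s₂ = φ s₂ s₁) ∧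
    (∀ s : ℝ, φ s 1 = (1 + μ * r⁻¹ * (1 - s)) ^ (-r)) := by
  subst hφ
  constructor
  · intro s₁ s₂
    simp only
    congr 1
    ring
  · intro s
    simp only
    congr 1
    field_simp
    ring
end

section
/- Let α ∈ (0,1), μ > 0, and Ψ_ε(s) = (1+(1-α)μ(1-s))^{-1}, with Ψ_G^{(j)} the j-th iterate of Ψ_G(s) = 1-α(1-s)/(1+(1-α)μ(1-s)). Then for all s in [0,1), the infinite product ∏_{j=0}^{∞} Ψ_ε(Ψ_G^{(j)}(s)) converges and equals (1+μ(1-s))^{-1}. -/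
/-- MA(∞) representation of the novel geometric INAR(1) process: the marginal
pgf factors as the convergent infinite product of the innovation pgf composed
with the iterates of the thinning pgf. -/
theorem MA_infinity_novel_geometric (α μ : ℝ)
    (hα : α ∈ Set.Ioo (0:ℝ) 1) (hμ : 0 < μ) :
    ∀ s ∈ Set.Ico (0:ℝ) 1,
      HasProd
        (fun j : ℕ =>
          (1 + (1 - α) * μ *
            (1 - (fun t : ℝ =>
              1 - α * (1 - t) / (1 + (1 - α) * μ * (1 - t)))^[j] s))⁻¹)
        (1 + μ * (1 - s))⁻¹ := by
  obtain ⟨hα0, hα1⟩ := hα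
  rintro s ⟨hs0, hs1⟩
  set c : ℝ := (1 - α) * μ with hc
  have hcpos : 0 < c := mul_pos (by linarith) hμ
  set f : ℝ → ℝ := fun t => 1 - α * (1 - t) / (1 + c * (1 - t)) with hf
  set u : ℕ → ℝ := fun n => 1 - f^[n] s with hu
  have hu0 : u 0 = 1 - s := by simp [hu]
  have hub : ∀ n, 0 < u n ∧ u n ≤ 1 := by
    intro n
    induction n with
    | zero => exact ⟨by rw [hu0]; linarith, by rw [hu0]; linarith⟩
    | succ n ih =>
      obtain ⟨h1, h2⟩ := ih
      have hden : (0:ℝ) < 1 + c * u n := by nlinarith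
      have : u (n+1) = α * u n / (1 + c * u n) := by
        simp only [hu, Function.iterate_succ_apply', hf]
        ring
      rw [this]
      constructor
      · positivity
      · rw [div_le_one hden]; nlinarith
  have hdec : ∀ n, u n ≤ α ^ n * (1 - s) := by
    intro n
    induction n with
    | zero => simp [hu0]
    | succ n ih =>
      have h1 := (hub n).1
      have hden : (0:ℝ) < 1 + c * u n := by nlinarith
      have he : u (n+1) = α * u n / (1 + c * u n) := by
        simp only [hu, Function.iterate_succ_apply', hf]
        ring
      have : u (n+1) ≤ α * u n := by
        rw [he, div_le_iff₀ hden]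
        nlinarith [mul_pos (mul_pos hα0 h1) (mul_pos hcpos h1)]
      calc u (n+1) ≤ α * u n := this
        _ ≤ α * (α ^ n * (1 - s)) := by nlinarith
        _ = α ^ (n+1) * (1 - s) := by ring
  have hulim : Filter.Tendsto u Filter.atTop (nhds 0) := by
    have h1 : Filter.Tendsto (fun n => α ^ n * (1 - s)) Filter.atTop (nhds 0) := by
      simpa using (tendsto_pow_atTop_nhds_zero_of_lt_one (le_of_lt hα0) hα1).mul_const (1 - s)
    refine squeeze_zero (fun n => (hub n).1.le) hdec h1
  set g : ℕ → ℝ := fun n => 1 + c * u n with hg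
  have hg1 : ∀ n, 1 ≤ g n := fun n => by have := (hub n).1; simp only [hg]; nlinarith [mul_pos hcpos this]
  set L : ℝ := 1 + μ * (1 - s) with hL
  have hLpos : 0 < L := by nlinarith
  have htel : ∀ n, ∏ j ∈ Finset.range n, g j = (1 + μ * u 0) / (1 + μ * u n) := by
    intro n
    induction n with
    | zero =>
      simp [hu0]
      field_simp
    | succ n ih =>
      have h1 := (hub n).1
      have hden : (0:ℝ) < 1 + c * u n := by nlinarith
      have hden2 : (0:ℝ) < 1 + μ * u n := by nlinarith
      have he : u (n+1) = α * u n / (1 + c * u n) := by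
        simp only [hu, Function.iterate_succ_apply', hf]
        ring
      have key : (1 + c * u n) * (1 + μ * u (n+1)) = 1 + μ * u n := by
        rw [he]
        field_simp
        ring
      rw [Finset.prod_range_succ]
      have hden3 : (0:ℝ) < 1 + μ * u (n+1) := by have := (hub (n+1)).1; nlinarith
      rw [eq_div_iff (ne_of_gt hden3), ih]
      simp only [hg]
      field_simp
      linear_combination (1 + μ * u 0) * key
  have htend : Filter.Tendsto (fun n => ∏ j ∈ Finset.range n, g j) Filter.atTop (nhds L) := by
    have h1 : Filter.Tendsto (fun n => (1 + μ * u 0) / (1 + μ * u n)) Filter.atTop (nhds L) := by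
      have h2 : Filter.Tendsto (fun n => 1 + μ * u n) Filter.atTop (nhds 1) := by
        have := (hulim.const_mul μ).const_add 1
        simpa using this
      have := (tendsto_const_nhds (x := 1 + μ * u 0) (f := Filter.atTop (α := ℕ))).div h2 one_ne_zero
      simpa [hu0, hL, Pi.div_def] using this
    simpa [htel] using h1
  have hmono : Monotone (fun F : Finset ℕ => ∏ j ∈ F, g j) := by
    intro F G hFG
    have h1 : (1:ℝ) ≤ ∏ j ∈ G \ F, g j := by
      calc (1:ℝ) = ∏ j ∈ G \ F, 1 := by simp
        _ ≤ ∏ j ∈ G \ F, g j :=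
          Finset.prod_le_prod (fun i _ => zero_le_one) (fun i _ => hg1 i)
    have h2 : (0:ℝ) ≤ ∏ j ∈ F, g j :=
      Finset.prod_nonneg fun i _ => le_trans zero_le_one (hg1 i)
    calc ∏ j ∈ F, g j = (∏ j ∈ F, g j) * 1 := by ring
      _ ≤ (∏ j ∈ F, g j) * ∏ j ∈ G \ F, g j := by nlinarith
      _ = ∏ j ∈ G, g j := by rw [mul_comm]; exact Finset.prod_sdiff hFG
  have hlub : IsLUB (Set.range fun F : Finset ℕ => ∏ j ∈ F, g j) L := by
    constructor
    · rintro x ⟨F, rfl⟩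
      obtain ⟨n, hn⟩ : ∃ n, F ⊆ Finset.range n := ⟨(F.sup id) + 1, fun i hi =>
        Finset.mem_range.mpr (Nat.lt_succ_of_le (Finset.le_sup (f := id) hi))⟩
      calc ∏ j ∈ F, g j ≤ ∏ j ∈ Finset.range n, g j := hmono hn
        _ = (1 + μ * u 0) / (1 + μ * u n) := htel n
        _ ≤ L := by
            have h1 := (hub n).1
            have h0 := (hub 0).1
            rw [div_le_iff₀ (by nlinarith), hL, hu0]
            have h2 : (0:ℝ) < 1 + μ * (1 - s) := by nlinarith
            nlinarith [mul_pos hμ h1, mul_pos h2 (mul_pos hμ h1)]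
    · intro b hb
      refine le_of_tendsto htend (Filter.Eventually.of_forall fun n => hb ⟨Finset.range n, rfl⟩)
  have hprod : HasProd g L := tendsto_atTop_isLUB hmono hlub
  have hinv : HasProd (fun n => (g n)⁻¹) L⁻¹ := by
    have := hprod.inv₀ (ne_of_gt hLpos)
    simpa [HasProd, Finset.prod_inv_distrib] using this
  exact hinv
end
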